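/- arXiv:cond-mat/0603593 — 6 statements merged into one kernel-verified Lean document; each statement's English description precedes it below -/
import Mathlib

section
/- Let q₁ ∈ ℝ, β₁ > 0 and δ > 0. Then there exists a uniquely determined pair (q₂, β₂) with β₂ > 0 such that (e_{q₁}^{−β₁x²})^δ = e_{q₂}^{−β₂x²} for all x ∈ ℝ; moreover q₂ = (δ − 1 + q₁)/δ and β₂ = δβ₁. -/
open MeasureTheory Filter Real Topology

/-- The `q`-exponential `e_q^x = [1 + (1-q)x]_+^{1/(1-q)}` (with `e_1^x = e^x`). -/
noncomputable def qExp (q x : ℝ) : ℝ :=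
  if q = 1 then Real.exp x else (max (1 + (1 - q) * x) 0) ^ (1 / (1 - q))

/-- The `q`-exponential of a complex argument, via the principal power. -/
noncomputable def qExpC (q : ℝ) (w : ℂ) : ℂ :=
  if q = 1 then Complex.exp w else (1 + (1 - (q : ℂ)) * w) ^ ((1 : ℂ) / (1 - (q : ℂ)))

/-- The `q`-product on complex numbers, via principal powers. -/
noncomputable def qProdC (q : ℝ) (x y : ℂ) : ℂ :=
  if q = 1 then x * y
  else (x ^ ((1 : ℂ) - (q : ℂ)) + y ^ ((1 : ℂ) - (q : ℂ)) - 1) ^ ((1 : ℂ) / (1 - (q : ℂ)))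

/-- The normalizing constant `C_q = ∫ e_q^{-x²} dx`. -/
noncomputable def qC (q : ℝ) : ℝ := ∫ x : ℝ, qExp q (-x ^ 2)

/-- The `q`-Gaussian `G_q(β; x) = (√β / C_q) e_q^{-βx²}`. -/
noncomputable def qGaussian (q β x : ℝ) : ℝ := (Real.sqrt β / qC q) * qExp q (-(β * x ^ 2))

/-- The `q`-Fourier transform `F_q[f](ξ) = ∫ f(x) e_q^{i x ξ f(x)^{q-1}} dx`. -/
noncomputable def qFourier (q : ℝ) (f : ℝ → ℝ) (ξ : ℝ) : ℂ :=
  ∫ x : ℝ, (f x : ℂ) * qExpC q (Complex.I * (x : ℂ) * (ξ : ℂ) * ((f x ^ (q - 1) : ℝ) : ℂ))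

/-- The `q`-mean `μ_q(f) = ∫ x f(x)^q dx / ∫ f(x)^q dx`. -/
noncomputable def qMean (q : ℝ) (f : ℝ → ℝ) : ℝ :=
  (∫ x : ℝ, x * f x ^ q) / (∫ x : ℝ, f x ^ q)

/-- The `q`-variance `σ_q²(f) = ∫ (x-μ_q(f))² f(x)^q dx / ∫ f(x)^q dx`. -/
noncomputable def qVar (q : ℝ) (f : ℝ → ℝ) : ℝ :=
  (∫ x : ℝ, (x - qMean q f) ^ 2 * f x ^ q) / (∫ x : ℝ, f x ^ q)

/-- Iterated `q`-product `w ⊗_q ⋯ ⊗_q w` (`N` factors). -/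
noncomputable def qProdPow (q : ℝ) (w : ℂ) : ℕ → ℂ
  | 0 => 1
  | 1 => w
  | n + 2 => qProdC q w (qProdPow q w (n + 1))

/-- `z(s) = (1+s)/(3-s)`. -/
noncomputable def zmap (s : ℝ) : ℝ := (1 + s) / (3 - s)

/-- The inverse of `z`: `z⁻¹(t) = (3t-1)/(1+t)`. -/
noncomputable def zinvmap (t : ℝ) : ℝ := (3 * t - 1) / (1 + t)

/-!
The powers `(e_q^{-βu})^δ` stay in the family: `(e_q^y)^δ = e_{q'}^{δy}` with
`1 - q' = (1 - q)/δ`, which gives existence. For uniqueness, write `f(u) = e_q^{-βu}` for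
`u = x² ≥ 0`. Since `(e_q)' = e_q^q`, the function `f` satisfies `f' = -β f^q` wherever
`1 - (1-q)βu > 0`, in particular on a neighbourhood of `0` in `[0, ∞)`. One-sided derivatives on
`[0, ∞)` are unique, so two such representations of `f` give `β = β'` at `u = 0`, and then
`f^q = f^{q'}` at a small `u > 0`, where `0 < f(u) < 1`, forces `q = q'`.
-/

section

variable {q x : ℝ}

lemma qExp_one (x : ℝ) : qExp 1 x = exp x := by simp [qExp]

lemma qExp_of_ne_one (hq : q ≠ 1) (x : ℝ) :
    qExp q x = max (1 + (1 - q) * x) 0 ^ (1 / (1 - q)) := by simp [qExp, hq]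

lemma qExp_eq_rpow (hq : q ≠ 1) (hx : 0 ≤ 1 + (1 - q) * x) :
    qExp q x = (1 + (1 - q) * x) ^ (1 / (1 - q)) := by
  rw [qExp_of_ne_one hq, max_eq_left hx]

lemma qExp_zero (q : ℝ) : qExp q 0 = 1 := by
  by_cases hq : q = 1
  · simp [hq, qExp_one]
  · simp [qExp_eq_rpow hq]

lemma qExp_pos (hx : 0 < 1 + (1 - q) * x) : 0 < qExp q x := by
  by_cases hq : q = 1
  · subst hq; rw [qExp_one]; exact exp_pos x
  · rw [qExp_eq_rpow hq hx.le]; exact rpow_pos_of_pos hx _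

lemma qExp_lt_one (hx₀ : x < 0) (hx : 0 < 1 + (1 - q) * x) : qExp q x < 1 := by
  rcases lt_trichotomy q 1 with hq | rfl | hq
  · rw [qExp_eq_rpow hq.ne hx.le]
    exact rpow_lt_one hx.le (by nlinarith) (by simp [hq])
  · rw [qExp_one]; exact exp_lt_one_iff.mpr hx₀
  · rw [qExp_eq_rpow hq.ne' hx.le]
    exact rpow_lt_one_of_one_lt_of_neg (by nlinarith) (by simp [hq])

theorem qExp_rpow (q x : ℝ) {δ : ℝ} (hδ : δ ≠ 0) :
    qExp q x ^ δ = qExp ((δ - 1 + q) / δ) (δ * x) := by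
  by_cases hq : q = 1
  · subst hq
    rw [show (δ - 1 + 1) / δ = 1 by field_simp; ring, qExp_one, qExp_one, ← exp_mul, mul_comm]
  · have hq' : (δ - 1 + q) / δ ≠ 1 := by
      rw [Ne, div_eq_one_iff_eq hδ]; contrapose! hq; linarith
    have hq_sub : 1 - q ≠ 0 := sub_ne_zero.mpr (Ne.symm hq)
    have hq'_sub : 1 - (δ - 1 + q) / δ = (1 - q) / δ := by field_simp; ring
    rw [qExp_of_ne_one hq, qExp_of_ne_one hq', ← rpow_mul (le_max_right _ _), hq'_sub,
      show 1 + (1 - q) / δ * (δ * x) = 1 + (1 - q) * x by field_simp,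
      show 1 / (1 - q) * δ = 1 / ((1 - q) / δ) by field_simp]

theorem hasDerivAt_qExp (hx : 0 < 1 + (1 - q) * x) : HasDerivAt (qExp q) (qExp q x ^ q) x := by
  by_cases hq : q = 1
  · subst hq
    rw [show qExp 1 = exp from funext qExp_one, rpow_one]
    exact hasDerivAt_exp x
  · have hq_sub : 1 - q ≠ 0 := sub_ne_zero.mpr (Ne.symm hq)
    have hbase : HasDerivAt (fun y => 1 + (1 - q) * y) (1 - q) x := by
      simpa using ((hasDerivAt_id x).const_mul (1 - q)).const_add 1
    have hpow := hbase.rpow_const (p := 1 / (1 - q)) (Or.inl hx.ne')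
    have hnear : ∀ᶠ y in 𝓝 x, 0 < 1 + (1 - q) * y :=
      (isOpen_lt continuous_const (by fun_prop)).mem_nhds hx
    refine (hpow.congr_of_eventuallyEq
      (hnear.mono fun y hy => qExp_eq_rpow hq hy.le)).congr_deriv ?_
    rw [qExp_eq_rpow hq hx.le, ← rpow_mul hx.le]
    field_simp
    congr 1
    field_simp
    ring

theorem hasDerivAt_qExp_neg_mul {β u : ℝ} (hu : 0 < 1 + (1 - q) * -(β * u)) :
    HasDerivAt (fun u => qExp q (-(β * u))) (qExp q (-(β * u)) ^ q * -β) u := by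
  have hlin : HasDerivAt (fun u => -(β * u)) (-β) u := by
    simpa [mul_comm] using hasDerivAt_mul_const (-β) (x := u)
  exact (hasDerivAt_qExp hu).comp u hlin

theorem eq_of_qExp_neg_mul_eqOn {a b α γ : ℝ} (hα : 0 < α)
    (h : ∀ u, 0 ≤ u → qExp a (-(α * u)) = qExp b (-(γ * u))) : a = b ∧ α = γ := by
  set f := fun u => qExp a (-(α * u))
  have slope : ∀ u, 0 ≤ u → 0 < 1 + (1 - a) * -(α * u) → 0 < 1 + (1 - b) * -(γ * u) →
      α * f u ^ a = γ * f u ^ b := by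
    intro u hu ha hb
    have hf := (hasDerivAt_qExp_neg_mul ha).hasDerivWithinAt (s := Set.Ici 0)
    have hg := ((hasDerivAt_qExp_neg_mul hb).hasDerivWithinAt (s := Set.Ici 0)).congr
      (fun v hv => h v hv) (h u hu)
    rw [← h u hu] at hg
    linear_combination -(uniqueDiffOn_Ici 0 u hu).eq_deriv _ hf hg
  have hαγ : α = γ := by simpa [f, qExp_zero] using slope 0 le_rfl (by simp) (by simp)
  subst hαγ
  have hpos : ∀ c : ℝ, ∀ᶠ u in 𝓝[>] 0, 0 < 1 + (1 - c) * -(α * u) := fun c =>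
    nhdsWithin_le_nhds <| (isOpen_lt continuous_const (by fun_prop)).mem_nhds (by simp)
  obtain ⟨u, hu, ha, hb⟩ := (eventually_mem_nhdsWithin.and ((hpos a).and (hpos b))).exists
  have hu' : -(α * u) < 0 := neg_neg_of_pos (mul_pos hα hu)
  have hfu : f u ^ a = f u ^ b := mul_left_cancel₀ hα.ne' (slope u (le_of_lt hu) ha hb)
  exact ⟨(rpow_right_inj (qExp_pos ha) (qExp_lt_one hu' ha).ne).mp hfu, rfl⟩

end

/-- Lemma 1: for any real `q₁`, `β₁ > 0`, `δ > 0` there is a uniquely determined pair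
`(q₂, β₂)` with `β₂ > 0` such that `(e_{q₁}^{-β₁x²})^δ = e_{q₂}^{-β₂x²}` for all `x`;
moreover `q₂ = (δ - 1 + q₁)/δ` and `β₂ = δβ₁`. -/
theorem qExp_pow_eq_qExp_unique (q₁ β₁ δ : ℝ) (hβ₁ : 0 < β₁) (hδ : 0 < δ) :
    ∀ p : ℝ × ℝ,
      (0 < p.2 ∧ ∀ x : ℝ, qExp q₁ (-(β₁ * x ^ 2)) ^ δ = qExp p.1 (-(p.2 * x ^ 2))) ↔
        p = ((δ - 1 + q₁) / δ, δ * β₁) := by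
  have hpow : ∀ x : ℝ,
      qExp q₁ (-(β₁ * x ^ 2)) ^ δ = qExp ((δ - 1 + q₁) / δ) (-(δ * β₁ * x ^ 2)) := fun x => by
    rw [qExp_rpow _ _ hδ.ne', mul_neg, mul_assoc]
  intro p
  constructor
  · rintro ⟨hp, hp_eq⟩
    have h_eqOn : ∀ u, 0 ≤ u →
        qExp p.1 (-(p.2 * u)) = qExp ((δ - 1 + q₁) / δ) (-(δ * β₁ * u)) := fun u hu => by
      rw [← sq_sqrt hu, ← hp_eq, hpow]
    obtain ⟨h₁, h₂⟩ := eq_of_qExp_neg_mul_eqOn hp h_eqOn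
    exact Prod.ext h₁ h₂
  · rintro rfl
    exact ⟨mul_pos hδ hβ₁, hpow⟩
end

section
/- For every q with −∞ < q < 1, the integral C_q = ∫_{−∞}^{∞} e_q^{−x²} dx equals 2√π · Γ(1/(1−q)) / ( (3−q) √(1−q) · Γ((3−q)/(2(1−q))) ). -/
open MeasureTheory Filter Real Topology

/-! Substituting `x ↦ x / √(1 - q)` turns `C_q` into `(1 - q)^{-1/2} ∫ (1 - x²)_+^p dx` with
`p = 1/(1 - q)`; by evenness and `t = x²` this is the Beta integral
`B(1/2, p + 1) = √π Γ(p + 1) / Γ(p + 3/2)`, and `Γ(s + 1) = s Γ(s)` gives the stated form. -/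

open Set

lemma integral_rpow_mul_one_sub_rpow {a b : ℝ} (ha : 0 < a) (hb : 0 < b) :
    ∫ t in (0 : ℝ)..1, t ^ (a - 1) * (1 - t) ^ (b - 1) = Gamma a * Gamma b / Gamma (a + b) := by
  have hB := Complex.betaIntegral_eq_Gamma_mul_div a b (by simpa) (by simpa)
  rw [← Complex.ofReal_add, Complex.Gamma_ofReal, Complex.Gamma_ofReal, Complex.Gamma_ofReal,
    Complex.betaIntegral] at hB
  apply Complex.ofReal_injective
  rw [← intervalIntegral.integral_ofReal]
  push_cast
  rw [← hB]
  refine intervalIntegral.integral_congr fun t ht => ?_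
  rw [uIcc_of_le zero_le_one] at ht
  simp only [Complex.ofReal_cpow ht.1, Complex.ofReal_cpow (sub_nonneg.2 ht.2)]
  push_cast
  rfl

lemma integral_Ioi_rpow_mul_max_one_sub_rpow {a b : ℝ} (ha : 0 < a) (hb : 0 < b) :
    ∫ t in Ioi 0, t ^ (a - 1) * max (1 - t) 0 ^ b =
      Gamma a * Gamma (b + 1) / Gamma (a + b + 1) := by
  have hvanish : ∀ t ∈ Ioi (0 : ℝ) \ Ioc 0 1, t ^ (a - 1) * max (1 - t) 0 ^ b = 0 := by
    rintro t ⟨ht0, ht⟩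
    have : 1 < t := lt_of_not_ge fun h => ht ⟨ht0, h⟩
    rw [max_eq_right (by linarith), zero_rpow hb.ne', mul_zero]
  rw [setIntegral_eq_of_subset_of_forall_sdiff_eq_zero measurableSet_Ioi Ioc_subset_Ioi_self
      hvanish, ← intervalIntegral.integral_of_le zero_le_one, add_assoc,
    ← integral_rpow_mul_one_sub_rpow ha (by linarith : 0 < b + 1)]
  refine intervalIntegral.integral_congr fun t ht => ?_
  rw [uIcc_of_le zero_le_one] at ht
  simp only [max_eq_left (sub_nonneg.2 ht.2), add_sub_cancel_right]

lemma integral_max_one_sub_sq_rpow {p : ℝ} (hp : 0 < p) :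
    ∫ x : ℝ, max (1 - x ^ 2) 0 ^ p = √π * Gamma (p + 1) / Gamma (p + 3 / 2) := by
  have hsubst : ∀ x ∈ Ioi (0 : ℝ),
      (2 * x ^ ((2 : ℝ) - 1)) •
          ((x ^ (2 : ℝ)) ^ ((1 / 2 : ℝ) - 1) * max (1 - x ^ (2 : ℝ)) 0 ^ p) =
        2 * max (1 - x ^ 2) 0 ^ p := by
    intro x hx
    have hx : 0 < x := hx
    rw [← rpow_mul hx.le, smul_eq_mul, rpow_two]
    norm_num [rpow_neg_one]
    field_simp
  calc ∫ x : ℝ, max (1 - x ^ 2) 0 ^ p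
      = ∫ x in Ioi 0, 2 * max (1 - x ^ 2) 0 ^ p := by
        rw [integral_const_mul]
        have h := integral_comp_abs (f := fun x => max (1 - x ^ 2) 0 ^ p)
        simp only [sq_abs] at h
        exact h
    _ = ∫ t in Ioi 0, t ^ ((1 / 2 : ℝ) - 1) * max (1 - t) 0 ^ p :=
        (setIntegral_congr_fun measurableSet_Ioi hsubst).symm.trans
          (integral_comp_rpow_Ioi_of_pos (g := fun t => t ^ ((1 / 2 : ℝ) - 1) * max (1 - t) 0 ^ p)
            two_pos)
    _ = √π * Gamma (p + 1) / Gamma (p + 3 / 2) := by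
        rw [integral_Ioi_rpow_mul_max_one_sub_rpow one_half_pos hp, Gamma_one_half_eq]
        ring_nf

lemma qC_eq_inv_sqrt_mul_integral {q : ℝ} (hq : q < 1) :
    qC q = (√(1 - q))⁻¹ * ∫ x : ℝ, max (1 - x ^ 2) 0 ^ (1 / (1 - q)) := by
  have hq1 : 0 < 1 - q := sub_pos.2 hq
  have hrescale :
      ∀ x : ℝ, qExp q (-x ^ 2) = max (1 - (√(1 - q) * x) ^ 2) 0 ^ (1 / (1 - q)) := by
    intro x
    rw [qExp, if_neg hq.ne, mul_pow, sq_sqrt hq1.le]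
    ring_nf
  rw [qC, funext hrescale,
    Measure.integral_comp_mul_left (fun y => max (1 - y ^ 2) 0 ^ (1 / (1 - q))), abs_inv,
    abs_of_pos (sqrt_pos.2 hq1), smul_eq_mul]

/-- For `q < 1`, `C_q = 2√π Γ(1/(1-q)) / ((3-q)√(1-q) Γ((3-q)/(2(1-q))))`. -/
theorem qC_eq_of_q_lt_one (q : ℝ) (hq : q < 1) :
    qC q = 2 * Real.sqrt π * Real.Gamma (1 / (1 - q)) /
      ((3 - q) * Real.sqrt (1 - q) * Real.Gamma ((3 - q) / (2 * (1 - q)))) := by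
  have hq1 : 0 < 1 - q := sub_pos.2 hq
  set p := 1 / (1 - q) with hp_def
  have hp : 0 < p := by positivity
  have hp_half : (3 - q) / (2 * (1 - q)) = p + 1 / 2 := by rw [hp_def]; field_simp; ring
  have hp_half_pos : 0 < p + 1 / 2 := by positivity
  rw [qC_eq_inv_sqrt_mul_integral hq, integral_max_one_sub_sq_rpow hp, hp_half,
    Gamma_add_one hp.ne', show p + 3 / 2 = p + 1 / 2 + 1 by ring, Gamma_add_one hp_half_pos.ne']
  field_simp
  rw [eq_div_iff (by linarith), hp_def]
  field_simp
  ring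
end

section
/- For every q with 1 < q < 3, the integral C_q = ∫_{−∞}^{∞} e_q^{−x²} dx converges and equals √π · Γ((3−q)/(2(q−1))) / ( √(q−1) · Γ(1/(q−1)) ). -/
open MeasureTheory Filter Real Topology

/-!
For `q > 1` we have `e_q^{-x²} = (1 + (q - 1) x²) ^ (-s)` with `s = 1 / (q - 1)`, so rescaling `x`
by `√(q - 1)` reduces `C_q` to `∫ (1 + x²) ^ (-s) dx`, which converges since `s > 1/2`, i.e.
`q < 3`. The integrand is even, and on the half line the substitution `y = (1 + x²)⁻¹` turns the
integral into `B(s - 1/2, 1/2) / 2 = Γ(s - 1/2) Γ(1/2) / (2 Γ(s))`, with `Γ(1/2) = √π`.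
-/

open Set

lemma integral_Ioo_rpow_mul_one_sub_rpow {u v : ℝ} (hu : 0 < u) (hv : 0 < v) :
    ∫ x in Ioo (0 : ℝ) 1, x ^ (u - 1) * (1 - x) ^ (v - 1) = Gamma u * Gamma v / Gamma (u + v) := by
  have hcast : ∀ x ∈ uIcc (0 : ℝ) 1, ((x ^ (u - 1) * (1 - x) ^ (v - 1) : ℝ) : ℂ) =
      (x : ℂ) ^ ((u : ℂ) - 1) * (1 - (x : ℂ)) ^ ((v : ℂ) - 1) := by
    intro x hx
    rw [uIcc_of_le zero_le_one] at hx
    push_cast [Complex.ofReal_cpow hx.1, Complex.ofReal_cpow (sub_nonneg.2 hx.2)]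
    rfl
  rw [← integral_Ioc_eq_integral_Ioo, ← intervalIntegral.integral_of_le zero_le_one,
    ← Complex.ofReal_inj, ← intervalIntegral.integral_ofReal, intervalIntegral.integral_congr hcast,
    ← Complex.betaIntegral, Complex.betaIntegral_eq_Gamma_mul_div _ _ (by simpa) (by simpa)]
  push_cast [← Complex.Gamma_ofReal]
  rfl

lemma injOn_inv_one_add_sq : InjOn (fun x : ℝ => (1 + x ^ 2)⁻¹) (Ioi 0) := by
  intro x hx y hy hxy
  simp only [inv_inj, add_right_inj] at hxy
  exact (pow_left_inj₀ (le_of_lt hx) (le_of_lt hy) two_ne_zero).1 hxy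

lemma image_inv_one_add_sq_Ioi : (fun x : ℝ => (1 + x ^ 2)⁻¹) '' Ioi 0 = Ioo 0 1 := by
  ext y
  constructor
  · rintro ⟨x, hx, rfl⟩
    exact ⟨by positivity, inv_lt_one_of_one_lt₀ (by simpa using pow_pos (mem_Ioi.1 hx) 2)⟩
  · rintro ⟨hy0, hy1⟩
    have hy : 0 < y⁻¹ - 1 := sub_pos.2 (one_lt_inv₀ hy0 |>.2 hy1)
    refine ⟨√(y⁻¹ - 1), sqrt_pos.2 hy, ?_⟩
    simp [sq_sqrt hy.le]

lemma abs_deriv_mul_beta_integrand_inv_one_add_sq (s : ℝ) {x : ℝ} (hx : 0 < x) :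
    |-(2 * x) / (1 + x ^ 2) ^ 2| *
        (((1 + x ^ 2)⁻¹) ^ (s - 1 / 2 - 1) * (1 - (1 + x ^ 2)⁻¹) ^ ((1 : ℝ) / 2 - 1)) =
      2 * (1 + x ^ 2) ^ (-s) := by
  set A := 1 + x ^ 2
  have hA : 0 < A := by positivity
  have h1 : 1 - A⁻¹ = x ^ 2 * A⁻¹ := by field_simp; ring
  have h2 : (x ^ 2) ^ ((1 : ℝ) / 2 - 1) = x⁻¹ := by
    rw [← rpow_natCast, ← rpow_mul hx.le]; norm_num [rpow_neg_one]
  rw [h1, mul_rpow (by positivity) (by positivity), h2, inv_rpow hA.le, inv_rpow hA.le,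
    ← rpow_neg hA.le, ← rpow_neg hA.le, abs_div, abs_neg, abs_of_pos (by positivity),
    abs_of_pos (by positivity), ← rpow_natCast]
  field_simp
  rw [← rpow_add hA, ← rpow_add hA]
  ring_nf

lemma integral_Ioi_one_add_sq_rpow_neg {s : ℝ} (hs : 1 / 2 < s) :
    ∫ x in Ioi (0 : ℝ), (1 + x ^ 2) ^ (-s) = Gamma (s - 1 / 2) * Gamma (1 / 2) / (2 * Gamma s) := by
  have hderiv : ∀ x ∈ Ioi (0 : ℝ),
      HasDerivWithinAt (fun x : ℝ => (1 + x ^ 2)⁻¹) (-(2 * x) / (1 + x ^ 2) ^ 2) (Ioi 0) x :=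
    fun x _ => (((hasDerivAt_pow 2 x).const_add 1).fun_inv (by positivity)).hasDerivWithinAt
      |>.congr_deriv (by norm_num)
  have hsubst := integral_image_eq_integral_abs_deriv_smul measurableSet_Ioi hderiv
    injOn_inv_one_add_sq fun y => y ^ (s - 1 / 2 - 1) * (1 - y) ^ ((1 : ℝ) / 2 - 1)
  simp only [smul_eq_mul] at hsubst
  rw [image_inv_one_add_sq_Ioi, integral_Ioo_rpow_mul_one_sub_rpow (by linarith) one_half_pos,
    setIntegral_congr_fun measurableSet_Ioi
      fun x hx => abs_deriv_mul_beta_integrand_inv_one_add_sq s hx,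
    integral_const_mul, sub_add_cancel] at hsubst
  rw [mul_comm 2, ← div_div, hsubst]
  ring

lemma integrable_one_add_sq_rpow_neg {s : ℝ} (hs : 1 / 2 < s) :
    Integrable fun x : ℝ => (1 + x ^ 2) ^ (-s) := by
  simpa [neg_div] using integrable_rpow_neg_one_add_norm_sq (E := ℝ) (μ := volume) (r := 2 * s)
    (by rw [Module.finrank_self, Nat.cast_one]; linarith)

lemma integral_one_add_sq_rpow_neg {s : ℝ} (hs : 1 / 2 < s) :
    ∫ x : ℝ, (1 + x ^ 2) ^ (-s) = √π * Gamma (s - 1 / 2) / Gamma s := by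
  have heven := integral_comp_abs (f := fun x : ℝ => (1 + x ^ 2) ^ (-s))
  simp only [sq_abs] at heven
  rw [heven, integral_Ioi_one_add_sq_rpow_neg hs, Gamma_one_half_eq]
  field_simp

lemma qExp_neg_sq_of_one_lt {q : ℝ} (hq : 1 < q) (x : ℝ) :
    qExp q (-x ^ 2) = (1 + (√(q - 1) * x) ^ 2) ^ (-(1 / (q - 1))) := by
  rw [qExp, if_neg hq.ne', mul_pow, sq_sqrt (by linarith), max_eq_left (by nlinarith),
    ← div_neg, neg_sub]
  ring_nf

/-- For `1 < q < 3`, the integral `C_q = ∫ e_q^{-x²} dx` converges and equals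
`√π Γ((3-q)/(2(q-1))) / (√(q-1) Γ(1/(q-1)))`. -/
theorem qC_eq_of_one_lt_q (q : ℝ) (hq1 : 1 < q) (hq3 : q < 3) :
    Integrable (fun x : ℝ => qExp q (-x ^ 2)) ∧
      qC q = Real.sqrt π * Real.Gamma ((3 - q) / (2 * (q - 1))) /
        (Real.sqrt (q - 1) * Real.Gamma (1 / (q - 1))) := by
  have hq : 0 < q - 1 := by linarith
  have hs : 1 / 2 < 1 / (q - 1) := one_div_lt_one_div_of_lt hq (by linarith)
  have hscale : 0 < √(q - 1) := sqrt_pos.2 hq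
  simp only [qC, qExp_neg_sq_of_one_lt hq1]
  refine ⟨(integrable_comp_mul_left_iff _ hscale.ne').2 (integrable_one_add_sq_rpow_neg hs), ?_⟩
  rw [Measure.integral_comp_mul_left (fun y => (1 + y ^ 2) ^ (-(1 / (q - 1)))),
    integral_one_add_sq_rpow_neg hs, smul_eq_mul, abs_of_pos (inv_pos.2 hscale),
    show 1 / (q - 1) - 1 / 2 = (3 - q) / (2 * (q - 1)) by field_simp; ring]
  field_simp
end

section
/- Fix q < 3 and define the two-sided sequence (q_n)_{n ∈ ℤ} by q₀ = q, q_{n+1} = z(q_n) for n ≥ 0, and q_{n−1} = z^{−1}(q_n) for n ≤ 0. Then for every integer n with 2 − n(q−1) ≠ 0, q_n = (2q + n(1−q)) / (2 + n(1−q)) = 1 + 2(q−1)/(2 − n(q−1)); equivalently, for q ≠ 1, 2/(1 − q_n) = 2/(1 − q) + n. Moreover q_n ≡ 1 for all n if q = 1, and q_n → 1 as n → ±∞ if q ≠ 1, and q_n > 1 for all n < 2/(q−1) when q ∈ (1, 3). -/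
open MeasureTheory Filter Real Topology

/-! The Möbius map `z` has the parabolic fixed point `1` and is conjugate to the translation by
`1` through `w(s) = 2/(1-s)`: indeed `w(z(s)) = w(s) + 1`. Hence the orbit of `q` is
`q_x = w⁻¹(w(q) + x) = 1 + 2(q-1)/(2 - x(q-1))`, which makes sense for real `x` and tends to the
fixed point as `x → ±∞`. -/

noncomputable def zOrbit (q x : ℝ) : ℝ := 1 + 2 * (q - 1) / (2 - x * (q - 1))

theorem zOrbit_zero (q : ℝ) : zOrbit q 0 = q := by
  simp [zOrbit]

theorem zmap_zOrbit {q x : ℝ} (hx : 2 - x * (q - 1) ≠ 0) (hx' : 2 - (x + 1) * (q - 1) ≠ 0) :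
    zmap (zOrbit q x) = zOrbit q (x + 1) := by
  rw [zmap, zOrbit, zOrbit, show 2 - (x + 1) * (q - 1) = 2 - x * (q - 1) - (q - 1) by ring] at *
  generalize 2 - x * (q - 1) = D at *
  generalize q - 1 = c at *
  rw [show 3 - (1 + 2 * c / D) = 2 * (D - c) / D by field_simp; ring]
  field_simp
  ring

theorem zinvmap_zOrbit {q x : ℝ} (hx : 2 - x * (q - 1) ≠ 0) (hx' : 2 - (x - 1) * (q - 1) ≠ 0) :
    zinvmap (zOrbit q x) = zOrbit q (x - 1) := by
  rw [zinvmap, zOrbit, zOrbit, show 2 - (x - 1) * (q - 1) = 2 - x * (q - 1) + (q - 1) by ring] at *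
  generalize 2 - x * (q - 1) = D at *
  generalize q - 1 = c at *
  rw [show 1 + (1 + 2 * c / D) = 2 * (D + c) / D by field_simp; ring]
  field_simp
  ring

theorem zOrbit_eq_div {q x : ℝ} (hx : 2 - x * (q - 1) ≠ 0) :
    zOrbit q x = (2 * q + x * (1 - q)) / (2 + x * (1 - q)) := by
  rw [zOrbit, show 2 + x * (1 - q) = 2 - x * (q - 1) by ring, one_add_div hx]
  ring

-- At the pole `x(q-1) = 2` both sides are `0`: the left one through the junk values `2/0 = 0`.
theorem two_div_one_sub_zOrbit {q : ℝ} (hq : q ≠ 1) (x : ℝ) :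
    2 / (1 - zOrbit q x) = 2 / (1 - q) + x := by
  have hc : 1 - q ≠ 0 := sub_ne_zero.mpr hq.symm
  rw [zOrbit, show 1 - (1 + 2 * (q - 1) / (2 - x * (q - 1))) = 2 * (1 - q) / (2 - x * (q - 1)) by
    ring]
  field_simp
  ring

theorem one_lt_zOrbit {q x : ℝ} (hq : 1 < q) (hx : x * (q - 1) < 2) : 1 < zOrbit q x := by
  have : 0 < 2 * (q - 1) / (2 - x * (q - 1)) := div_pos (by linarith) (by linarith)
  rw [zOrbit]
  linarith

theorem eq_zOrbit_of_nonneg {q : ℝ} {Q : ℤ → ℝ} (hQ0 : Q 0 = q)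
    (hup : ∀ n : ℤ, 0 ≤ n → Q (n + 1) = zmap (Q n)) {n : ℤ} (hn : 0 ≤ n)
    (hden : ∀ m ∈ Set.Icc 0 n, 2 - (m : ℝ) * (q - 1) ≠ 0) : Q n = zOrbit q n := by
  induction n, hn using Int.leInduction with
  | base => rw [hQ0, Int.cast_zero, zOrbit_zero]
  | succ k hk ih =>
    have hk' := hden (k + 1) ⟨by omega, le_rfl⟩
    push_cast at hk' ⊢
    rw [hup k hk, ih fun m hm => hden m ⟨hm.1, hm.2.trans (by omega)⟩,
      zmap_zOrbit (hden k ⟨hk, by omega⟩) hk']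

theorem eq_zOrbit_of_nonpos {q : ℝ} {Q : ℤ → ℝ} (hQ0 : Q 0 = q)
    (hdown : ∀ n : ℤ, n ≤ 0 → Q (n - 1) = zinvmap (Q n)) {n : ℤ} (hn : n ≤ 0)
    (hden : ∀ m ∈ Set.Icc n 0, 2 - (m : ℝ) * (q - 1) ≠ 0) : Q n = zOrbit q n := by
  induction n, hn using Int.leInductionDown with
  | base => rw [hQ0, Int.cast_zero, zOrbit_zero]
  | pred k hk ih =>
    have hk' := hden (k - 1) ⟨le_rfl, by omega⟩
    push_cast at hk' ⊢
    rw [hdown k hk, ih fun m hm => hden m ⟨(by omega : k - 1 ≤ k).trans hm.1, hm.2⟩,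
      zinvmap_zOrbit (hden k ⟨by omega, hk⟩) hk']

theorem eq_zOrbit {q : ℝ} {Q : ℤ → ℝ} (hQ0 : Q 0 = q)
    (hup : ∀ n : ℤ, 0 ≤ n → Q (n + 1) = zmap (Q n))
    (hdown : ∀ n : ℤ, n ≤ 0 → Q (n - 1) = zinvmap (Q n)) {n : ℤ}
    (hden : ∀ m ∈ Set.uIcc 0 n, 2 - (m : ℝ) * (q - 1) ≠ 0) : Q n = zOrbit q n := by
  rcases le_total 0 n with hn | hn
  · exact eq_zOrbit_of_nonneg hQ0 hup hn (Set.uIcc_of_le hn ▸ hden)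
  · exact eq_zOrbit_of_nonpos hQ0 hdown hn (Set.uIcc_of_ge hn ▸ hden)

theorem tendsto_zOrbit_cobounded (q : ℝ) : Tendsto (zOrbit q) (Bornology.cobounded ℝ) (𝓝 1) := by
  rcases eq_or_ne q 1 with rfl | hq
  · have : zOrbit 1 = fun _ => 1 := funext fun x => by simp [zOrbit]
    exact this ▸ tendsto_const_nhds
  have hden :
      Tendsto (fun x : ℝ => 2 - x * (q - 1)) (Bornology.cobounded ℝ) (Bornology.cobounded ℝ) :=
    (tendsto_const_sub_cobounded 2).comp (tendsto_mul_right_cobounded (sub_ne_zero.mpr hq))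
  have := ((tendsto_inv₀_cobounded.comp hden).const_mul (2 * (q - 1))).const_add 1
  rw [mul_zero, add_zero] at this
  exact this.congr fun x => by rw [zOrbit, div_eq_mul_inv, Function.comp_apply]

theorem tendsto_zOrbit_intCast_cofinite (q : ℝ) :
    Tendsto (fun n : ℤ => zOrbit q n) cofinite (𝓝 1) :=
  (tendsto_zOrbit_cobounded q).comp
    (Metric.cobounded_eq_cocompact (α := ℝ) ▸ Int.tendsto_coe_cofinite)

theorem qseq_closed_form_general (q : ℝ) (Q : ℤ → ℝ)
    (hQ0 : Q 0 = q)
    (hup : ∀ n : ℤ, 0 ≤ n → Q (n + 1) = zmap (Q n))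
    (hdown : ∀ n : ℤ, n ≤ 0 → Q (n - 1) = zinvmap (Q n)) :
    (∀ n : ℤ, (∀ m : ℤ, m ∈ Set.uIcc 0 n → 2 - (m : ℝ) * (q - 1) ≠ 0) →
      Q n = (2 * q + (n : ℝ) * (1 - q)) / (2 + (n : ℝ) * (1 - q)) ∧
        Q n = 1 + 2 * (q - 1) / (2 - (n : ℝ) * (q - 1))) ∧
    (q ≠ 1 → ∀ n : ℤ, (∀ m : ℤ, m ∈ Set.uIcc 0 n → 2 - (m : ℝ) * (q - 1) ≠ 0) →
      2 / (1 - Q n) = 2 / (1 - q) + (n : ℝ)) ∧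
    (q = 1 → ∀ n : ℤ, Q n = 1) ∧
    (q ≠ 1 → (∀ n : ℤ, 2 - (n : ℝ) * (q - 1) ≠ 0) →
      Tendsto (fun n : ℤ => Q n) atTop (nhds 1) ∧
        Tendsto (fun n : ℤ => Q n) atBot (nhds 1)) ∧
    (1 < q → ∀ n : ℤ, (n : ℝ) < 2 / (q - 1) → 1 < Q n) := by
  refine ⟨fun n hden => ?_, fun hq n hden => ?_, fun hq n => ?_, fun _ hden => ?_,
    fun hq n hn => ?_⟩
  · rw [eq_zOrbit hQ0 hup hdown hden]
    exact ⟨zOrbit_eq_div (hden n Set.right_mem_uIcc), rfl⟩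
  · rw [eq_zOrbit hQ0 hup hdown hden, two_div_one_sub_zOrbit hq]
  · subst hq
    rw [eq_zOrbit hQ0 hup hdown fun m _ => by norm_num]
    simp [zOrbit]
  · have hQ : Q = fun n : ℤ => zOrbit q n :=
      funext fun n => eq_zOrbit hQ0 hup hdown fun m _ => hden m
    rw [hQ]
    exact ⟨(tendsto_zOrbit_intCast_cofinite q).mono_left atTop_le_cofinite,
      (tendsto_zOrbit_intCast_cofinite q).mono_left atBot_le_cofinite⟩
  · have hq' : 0 < q - 1 := sub_pos.2 hq
    have hlt : ∀ m : ℤ, m ≤ max 0 n → (m : ℝ) * (q - 1) < 2 := fun m hm => by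
      have hm' : (m : ℝ) ≤ max 0 (n : ℝ) := by exact_mod_cast hm
      calc (m : ℝ) * (q - 1) ≤ max 0 (n : ℝ) * (q - 1) := by gcongr
        _ < 2 := by
          rw [max_mul_of_nonneg _ _ hq'.le, zero_mul]
          exact max_lt two_pos ((lt_div_iff₀ hq').1 hn)
    rw [eq_zOrbit hQ0 hup hdown fun m hm => (sub_pos.2 (hlt m hm.2)).ne']
    exact one_lt_zOrbit hq (hlt n le_sup_right)

/-- The two-sided sequence `q₀ = q`, `q_{n+1} = z(q_n)` (`n ≥ 0`), `q_{n-1} = z⁻¹(q_n)`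
(`n ≤ 0`) satisfies, wherever all intermediate denominators are nonzero,
`q_n = (2q + n(1-q))/(2 + n(1-q)) = 1 + 2(q-1)/(2 - n(q-1))`; equivalently, for `q ≠ 1`,
`2/(1-q_n) = 2/(1-q) + n`. Moreover `q_n ≡ 1` if `q = 1`; `q_n → 1` as `n → ±∞` if
`q ≠ 1`; and `q_n > 1` for all `n < 2/(q-1)` when `q ∈ (1,3)`. -/
theorem qseq_closed_form (q : ℝ) (hq : q < 3) (Q : ℤ → ℝ)
    (hQ0 : Q 0 = q)
    (hup : ∀ n : ℤ, 0 ≤ n → Q (n + 1) = zmap (Q n))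
    (hdown : ∀ n : ℤ, n ≤ 0 → Q (n - 1) = zinvmap (Q n)) :
    (∀ n : ℤ, (∀ m : ℤ, m ∈ Set.uIcc 0 n → 2 - (m : ℝ) * (q - 1) ≠ 0) →
      Q n = (2 * q + (n : ℝ) * (1 - q)) / (2 + (n : ℝ) * (1 - q)) ∧
        Q n = 1 + 2 * (q - 1) / (2 - (n : ℝ) * (q - 1))) ∧
    (q ≠ 1 → ∀ n : ℤ, (∀ m : ℤ, m ∈ Set.uIcc 0 n → 2 - (m : ℝ) * (q - 1) ≠ 0) →
      2 / (1 - Q n) = 2 / (1 - q) + (n : ℝ)) ∧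
    (q = 1 → ∀ n : ℤ, Q n = 1) ∧
    (q ≠ 1 → (∀ n : ℤ, 2 - (n : ℝ) * (q - 1) ≠ 0) →
      Tendsto (fun n : ℤ => Q n) atTop (nhds 1) ∧
        Tendsto (fun n : ℤ => Q n) atBot (nhds 1)) ∧
    (1 < q → ∀ n : ℤ, (n : ℝ) < 2 / (q - 1) → 1 < Q n) :=
  qseq_closed_form_general q Q hQ0 hup hdown
end

section
/- Let 1 ≤ q < 3, let f : ℝ → [0, ∞) be in L¹(ℝ), and let a > 0. Define f_a(x) = (1/a) f(x/a). Then for all ξ ∈ ℝ, F_q[f_a](ξ) = F_q[f]( a^{2−q} ξ ). -/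
open MeasureTheory Filter Real Topology

/-- Scaling property of the `q`-Fourier transform: for `1 ≤ q < 3`, nonnegative
`f ∈ L¹(ℝ)` and `a > 0`, with `f_a(x) = (1/a) f(x/a)` one has
`F_q[f_a](ξ) = F_q[f](a^{2-q} ξ)`. -/
theorem qFourier_scaling (q : ℝ) (hq1 : 1 ≤ q) (hq3 : q < 3)
    (f : ℝ → ℝ) (hf0 : ∀ x, 0 ≤ f x) (hfi : Integrable f) (a : ℝ) (ha : 0 < a) :
    ∀ ξ : ℝ, qFourier q (fun x => (1 / a) * f (x / a)) ξ = qFourier q f (a ^ (2 - q) * ξ) := by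
  intro ξ
  have ha' : a ≠ 0 := ha.ne'
  unfold qFourier
  have h1 : (1 / a) ^ (q - 1) = a ^ (1 - q) := by
    rw [one_div, Real.inv_rpow ha.le, ← Real.rpow_neg ha.le, neg_sub]
  have h2 : a⁻¹ * a ^ (2 - q) = a ^ (1 - q) := by
    rw [← Real.rpow_neg_one a, ← Real.rpow_add ha]
    ring_nf
  have key : ∀ x : ℝ,
      ((1 / a * f (x / a) : ℝ) : ℂ) *
        qExpC q (Complex.I * (x : ℂ) * (ξ : ℂ) * (((1 / a * f (x / a)) ^ (q - 1) : ℝ) : ℂ))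
      = (1 / a : ℂ) * ((f (x / a) : ℂ) *
          qExpC q (Complex.I * ((x / a : ℝ) : ℂ) * ((a ^ (2 - q) * ξ : ℝ) : ℂ) *
            ((f (x / a) ^ (q - 1) : ℝ) : ℂ))) := by
    intro x
    have harg : (x : ℝ) * ξ * ((1 / a * f (x / a)) ^ (q - 1)) =
        (x / a) * (a ^ (2 - q) * ξ) * (f (x / a) ^ (q - 1)) := by
      rw [Real.mul_rpow (by positivity) (hf0 _), h1, div_eq_mul_inv x a]
      have : x * a⁻¹ * (a ^ (2 - q) * ξ) = x * (a⁻¹ * a ^ (2 - q)) * ξ := by ring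
      rw [this, h2]; ring
    have hargC : Complex.I * (x : ℂ) * (ξ : ℂ) * (((1 / a * f (x / a)) ^ (q - 1) : ℝ) : ℂ)
        = Complex.I * ((x / a : ℝ) : ℂ) * ((a ^ (2 - q) * ξ : ℝ) : ℂ) *
            ((f (x / a) ^ (q - 1) : ℝ) : ℂ) := by
      have := congrArg (fun r : ℝ => Complex.I * (r : ℂ)) harg
      push_cast at this ⊢
      linear_combination this
    rw [hargC]
    push_cast
    ring
  calc (∫ x : ℝ, ((1 / a * f (x / a) : ℝ) : ℂ) *
        qExpC q (Complex.I * (x : ℂ) * (ξ : ℂ) * (((1 / a * f (x / a)) ^ (q - 1) : ℝ) : ℂ)))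
      = ∫ x : ℝ, (1 / a : ℂ) • ((fun y : ℝ => (f y : ℂ) *
          qExpC q (Complex.I * (y : ℂ) * ((a ^ (2 - q) * ξ : ℝ) : ℂ) *
            ((f y ^ (q - 1) : ℝ) : ℂ))) (x / a)) := by
        refine integral_congr_ae (Filter.Eventually.of_forall fun x => ?_)
        simpa [smul_eq_mul] using key x
    _ = (1 / a : ℂ) • (|a| • ∫ y : ℝ, (f y : ℂ) *
          qExpC q (Complex.I * (y : ℂ) * ((a ^ (2 - q) * ξ : ℝ) : ℂ) *
            ((f y ^ (q - 1) : ℝ) : ℂ))) := by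
        rw [integral_smul]
        congr 1
        exact Measure.integral_comp_div (fun y : ℝ => (f y : ℂ) *
          qExpC q (Complex.I * (y : ℂ) * ((a ^ (2 - q) * ξ : ℝ) : ℂ) *
            ((f y ^ (q - 1) : ℝ) : ℂ))) a
    _ = ∫ y : ℝ, (f y : ℂ) *
          qExpC q (Complex.I * (y : ℂ) * ((a ^ (2 - q) * ξ : ℝ) : ℂ) *
            ((f y ^ (q - 1) : ℝ) : ℂ)) := by
        rw [abs_of_pos ha, Complex.real_smul, smul_eq_mul, ← mul_assoc, one_div,
          ← Complex.ofReal_inv, ← Complex.ofReal_mul, inv_mul_cancel₀ ha']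
        simp
end

section
/- Let 1 ≤ q < 2 and let f be a probability density on ℝ with ν_q(f) = ∫ f(x)^q dx < ∞, ν_{2q−1}(f) = ∫ f(x)^{2q−1} dx < ∞, finite q-mean μ_q(f), and finite second moment τ = ∫ x² f(x)^{2q−1} dx. Then, as ξ → 0, F_q[f](ξ) = 1 + i ξ μ_q(f) ν_q(f) − (q/2) ξ² τ + o(ξ²); that is, ( F_q[f](ξ) − 1 − i ξ μ_q(f) ν_q(f) + (q/2) ξ² τ ) / ξ² → 0 as ξ → 0. -/
open MeasureTheory Filter Real Topology

/-!
On the imaginary axis `e_q^{it} = (1 + (1-q) i t)^{1/(1-q)}` has a base of real part `1`, so for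
`q ≥ 1` each function `(1 + (1-q) i t)^{1/(1-q) - k}` has modulus at most `1`, and differentiating
it gives `(1 - k(1-q)) i` times the next one. Hence the Taylor remainder
`R(t) = e_q^{it} - 1 - it + (q/2) t²` obeys both `‖R t‖ ≤ 2q t²` and `‖R t‖ ≤ q(2q-1) |t|³`.
With `a(x) = x f(x)^{q-1}` one has `f a = x f^q` and `f a² = x² f^{2q-1}`, so the error of the
expansion is exactly `∫ f(x) R(ξ a(x)) dx`. Divided by `ξ²` the integrand is dominated by
`2q x² f^{2q-1}` and, by the cubic bound, tends to `0` pointwise: dominated convergence concludes.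
-/

open Complex in
noncomputable def qExpIPow (q : ℝ) (k : ℕ) (t : ℝ) : ℂ :=
  if q = 1 then exp (I * t) else (1 + (1 - q) * (I * t)) ^ (((1 - q)⁻¹ - k : ℝ) : ℂ)

namespace qExpIPow

open Complex

lemma zero_eq_qExpC (q t : ℝ) : qExpIPow q 0 t = qExpC q (I * t) := by
  unfold qExpIPow qExpC
  split_ifs <;> simp

lemma apply_zero (q : ℝ) (k : ℕ) : qExpIPow q k 0 = 1 := by
  simp [qExpIPow]

lemma norm_le_one {q : ℝ} (hq : 1 ≤ q) (k : ℕ) (t : ℝ) : ‖qExpIPow q k t‖ ≤ 1 := by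
  unfold qExpIPow
  split_ifs with h
  · simp [norm_exp]
  · rw [norm_cpow_real]
    refine Real.rpow_le_one_of_one_le_of_nonpos
      (by simpa using abs_re_le_norm (1 + (1 - (q : ℂ)) * (I * t))) ?_
    have : (1 - q)⁻¹ < 0 := inv_lt_zero.mpr (by linarith [lt_of_le_of_ne hq (Ne.symm h)])
    linarith [(Nat.cast_nonneg k : (0 : ℝ) ≤ k)]

lemma hasDerivAt (q : ℝ) (k : ℕ) (t : ℝ) :
    HasDerivAt (qExpIPow q k) ((1 - k * (1 - q)) * I * qExpIPow q (k + 1) t) t := by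
  unfold qExpIPow
  split_ifs with h
  · subst h
    simpa [mul_comm] using ((hasDerivAt_id (t : ℂ)).const_mul I).cexp.comp_ofReal
  · have hq : (1 : ℂ) - q ≠ 0 := sub_ne_zero.mpr (by exact_mod_cast Ne.symm h)
    have hbase : HasDerivAt (fun w : ℂ => 1 + (1 - (q : ℂ)) * (I * w)) ((1 - q) * I) t := by
      simpa only [id, mul_one, mul_assoc] using
        ((hasDerivAt_id (t : ℂ)).const_mul ((1 - (q : ℂ)) * I)).const_add 1
    convert (hbase.cpow_const (c := (((1 - q)⁻¹ - k : ℝ) : ℂ))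
      (by simp [mem_slitPlane_iff])).comp_ofReal using 1
    push_cast
    rw [show (1 - q : ℂ)⁻¹ - (k + 1) = (1 - q : ℂ)⁻¹ - k - 1 by ring]
    field_simp

lemma continuous (q : ℝ) (k : ℕ) : Continuous (qExpIPow q k) :=
  continuous_iff_continuousAt.2 fun t => (hasDerivAt q k t).continuousAt

end qExpIPow

lemma norm_le_mul_abs_pow_succ_of_hasDerivAt {E : Type*} [NormedAddCommGroup E] [NormedSpace ℝ E]
    {F F' : ℝ → E} {C : ℝ} {n : ℕ} (hF : ∀ u, HasDerivAt F (F' u) u) (hF0 : F 0 = 0)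
    (hF' : ∀ u, ‖F' u‖ ≤ C * |u| ^ n) (t : ℝ) : ‖F t‖ ≤ C * |t| ^ (n + 1) := by
  have hC : 0 ≤ C := by simpa using (norm_nonneg _).trans (hF' 1)
  have hbound : ∀ u ∈ Set.uIcc 0 t, ‖F' u‖ ≤ C * |t| ^ n := fun u hu =>
    (hF' u).trans <| mul_le_mul_of_nonneg_left
      (pow_le_pow_left₀ (abs_nonneg u) (by simpa using Set.abs_sub_left_of_mem_uIcc hu) n) hC
  have := (convex_uIcc 0 t).norm_image_sub_le_of_norm_hasDerivWithin_le
    (fun u _ => (hF u).hasDerivWithinAt) hbound Set.left_mem_uIcc Set.right_mem_uIcc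
  simpa [hF0, pow_succ, mul_assoc] using this

open Complex in
noncomputable def qExpIRem (q t : ℝ) : ℂ := qExpC q (I * t) - 1 - I * t + q / 2 * t ^ 2

namespace qExpIRem

open Complex

lemma apply_zero (q : ℝ) : qExpIRem q 0 = 0 := by
  simp [qExpIRem, qExpC]

lemma hasDerivAt (q t : ℝ) :
    HasDerivAt (qExpIRem q) (I * qExpIPow q 1 t - I + q * t) t := by
  have hE : HasDerivAt (fun t : ℝ => qExpC q (I * t)) (I * qExpIPow q 1 t) t := by
    simpa [funext (qExpIPow.zero_eq_qExpC q)] using qExpIPow.hasDerivAt q 0 t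
  have hsq := ((hasDerivAt_id (t : ℂ)).pow 2).comp_ofReal.const_mul ((q : ℂ) / 2)
  have hlin := (hasDerivAt_id (t : ℂ)).comp_ofReal.const_mul I
  refine (((hE.sub_const 1).sub hlin).add hsq).congr_deriv ?_
  simp only [id, Nat.cast_ofNat]
  ring

lemma hasDerivAt_deriv (q t : ℝ) :
    HasDerivAt (fun t : ℝ => I * qExpIPow q 1 t - I + q * t) (q - q * qExpIPow q 2 t) t := by
  have hlin := (hasDerivAt_id (t : ℂ)).comp_ofReal.const_mul (q : ℂ)
  refine ((((qExpIPow.hasDerivAt q 1 t).const_mul I).sub_const I).add hlin).congr_deriv ?_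
  simp only [Nat.reduceAdd, Nat.cast_one]
  linear_combination ((q : ℂ) * qExpIPow q 2 t) * I_sq

lemma hasDerivAt_deriv_deriv (q t : ℝ) :
    HasDerivAt (fun t : ℝ => (q : ℂ) - q * qExpIPow q 2 t)
      (-(q * (2 * q - 1)) * I * qExpIPow q 3 t) t := by
  refine (((qExpIPow.hasDerivAt q 2 t).const_mul (q : ℂ)).const_sub (q : ℂ)).congr_deriv ?_
  simp only [Nat.reduceAdd, Nat.cast_ofNat]
  ring

lemma deriv_apply_zero (q : ℝ) : I * qExpIPow q 1 0 - I + q * (0 : ℝ) = 0 := by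
  simp [qExpIPow.apply_zero]

lemma deriv_deriv_apply_zero (q : ℝ) : (q : ℂ) - q * qExpIPow q 2 0 = 0 := by
  simp [qExpIPow.apply_zero]

lemma norm_le_sq {q : ℝ} (hq : 1 ≤ q) (t : ℝ) : ‖qExpIRem q t‖ ≤ 2 * q * t ^ 2 := by
  have h2 (u : ℝ) : ‖(q : ℂ) - q * qExpIPow q 2 u‖ ≤ 2 * q * |u| ^ 0 := by
    calc ‖(q : ℂ) - q * qExpIPow q 2 u‖ ≤ ‖(q : ℂ)‖ + ‖(q : ℂ)‖ * ‖qExpIPow q 2 u‖ := by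
          simpa only [norm_mul] using norm_sub_le (q : ℂ) (q * qExpIPow q 2 u)
      _ ≤ q + q * 1 := by
          rw [norm_real, Real.norm_of_nonneg (by linarith)]
          gcongr
          exact qExpIPow.norm_le_one hq 2 u
      _ = 2 * q * |u| ^ 0 := by ring
  have h1 := norm_le_mul_abs_pow_succ_of_hasDerivAt (hasDerivAt_deriv q) (deriv_apply_zero q) h2
  have h0 := norm_le_mul_abs_pow_succ_of_hasDerivAt (hasDerivAt q) (apply_zero q) h1
  simpa using h0 t

lemma norm_le_cube {q : ℝ} (hq : 1 ≤ q) (t : ℝ) : ‖qExpIRem q t‖ ≤ q * (2 * q - 1) * |t| ^ 3 := by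
  have h3 (u : ℝ) : ‖-(q * (2 * q - 1)) * I * qExpIPow q 3 u‖ ≤ q * (2 * q - 1) * |u| ^ 0 := by
    have hc : ((q * (2 * q - 1) : ℝ) : ℂ) = q * (2 * q - 1) := by push_cast; ring
    rw [← hc, norm_mul, norm_mul, norm_neg, norm_real, norm_I, mul_one,
      Real.norm_of_nonneg (by nlinarith), pow_zero, mul_one]
    exact mul_le_of_le_one_right (by nlinarith) (qExpIPow.norm_le_one hq 3 u)
  have h2 := norm_le_mul_abs_pow_succ_of_hasDerivAt (hasDerivAt_deriv_deriv q)
    (deriv_deriv_apply_zero q) h3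
  have h1 := norm_le_mul_abs_pow_succ_of_hasDerivAt (hasDerivAt_deriv q) (deriv_apply_zero q) h2
  exact norm_le_mul_abs_pow_succ_of_hasDerivAt (hasDerivAt q) (apply_zero q) h1 t

lemma continuous (q : ℝ) : Continuous (qExpIRem q) :=
  continuous_iff_continuousAt.2 fun t => (hasDerivAt q t).continuousAt

end qExpIRem

lemma tendsto_inv_sq_smul_integral_smul_comp_mul {E : Type*} [NormedAddCommGroup E]
    [NormedSpace ℝ E] {w a : ℝ → ℝ} {R : ℝ → E} {A B : ℝ} (hw : AEMeasurable w)
    (hw0 : ∀ x, 0 ≤ w x) (ha : AEMeasurable a) (hR : Continuous R)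
    (hRA : ∀ t, ‖R t‖ ≤ A * t ^ 2) (hRB : ∀ t, ‖R t‖ ≤ B * |t| ^ 3)
    (hwa : Integrable fun x => w x * a x ^ 2) :
    Tendsto (fun ξ : ℝ => (ξ ^ 2)⁻¹ • ∫ x, w x • R (ξ * a x)) (𝓝[≠] 0) (𝓝 0) := by
  simp_rw [← integral_smul]
  rw [← integral_zero ℝ E]
  refine tendsto_integral_filter_of_dominated_convergence (fun x => A * (w x * a x ^ 2))
    (Eventually.of_forall fun ξ => ?_) ?_ (hwa.const_mul A) (Eventually.of_forall fun x => ?_)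
  · exact (hw.aestronglyMeasurable.smul
      (hR.comp_aestronglyMeasurable (ha.const_mul ξ).aestronglyMeasurable)).const_smul _
  · filter_upwards [self_mem_nhdsWithin] with ξ (hξ : ξ ≠ 0)
    refine Eventually.of_forall fun x => ?_
    rw [norm_smul, norm_smul, Real.norm_of_nonneg (hw0 x), Real.norm_of_nonneg (by positivity)]
    calc (ξ ^ 2)⁻¹ * (w x * ‖R (ξ * a x)‖) ≤ (ξ ^ 2)⁻¹ * (w x * (A * (ξ * a x) ^ 2)) := by
          gcongr; exacts [hw0 x, hRA _]
      _ = A * (w x * a x ^ 2) := by field_simp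
  · have hlin : Tendsto (fun ξ : ℝ => B * w x * |a x| ^ 3 * |ξ|) (𝓝[≠] 0) (𝓝 0) := by
      have hcont : Continuous fun ξ : ℝ => B * w x * |a x| ^ 3 * |ξ| := by fun_prop
      simpa using (hcont.tendsto 0).mono_left nhdsWithin_le_nhds
    refine squeeze_zero_norm' ?_ hlin
    filter_upwards [self_mem_nhdsWithin] with ξ (hξ : ξ ≠ 0)
    rw [norm_smul, norm_smul, Real.norm_of_nonneg (hw0 x), Real.norm_of_nonneg (by positivity)]
    calc (ξ ^ 2)⁻¹ * (w x * ‖R (ξ * a x)‖) ≤ (ξ ^ 2)⁻¹ * (w x * (B * |ξ * a x| ^ 3)) := by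
          gcongr; exacts [hw0 x, hRB _]
      _ = B * w x * |a x| ^ 3 * |ξ| := by
          rw [abs_mul, ← sq_abs ξ]
          field_simp

lemma integral_rpow_ne_zero {f : ℝ → ℝ} {q : ℝ} (hf0 : ∀ x, 0 ≤ f x)
    (hfq : Integrable fun x => f x ^ q) (hf : ∫ x, f x ≠ 0) : ∫ x, f x ^ q ≠ 0 := by
  refine fun h => hf ?_
  have hf_ae : f =ᵐ[volume] 0 := by
    filter_upwards [(integral_eq_zero_iff_of_nonneg (fun x => Real.rpow_nonneg (hf0 x) q) hfq).mp h]
      with x hx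
    exact ((Real.rpow_eq_zero_iff_of_nonneg (hf0 x)).mp hx).1
  simp [integral_congr_ae hf_ae]

lemma mul_mul_rpow_sub_one {q y : ℝ} (hq : q ≠ 0) (hy : 0 ≤ y) (x : ℝ) :
    y * (x * y ^ (q - 1)) = x * y ^ q := by
  rw [mul_left_comm, ← Real.rpow_one_add' hy (by rwa [add_sub_cancel]), add_sub_cancel]

lemma mul_mul_rpow_sub_one_sq {q y : ℝ} (hq : 2 * q - 1 ≠ 0) (hy : 0 ≤ y) (x : ℝ) :
    y * (x * y ^ (q - 1)) ^ 2 = x ^ 2 * y ^ (2 * q - 1) := by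
  rw [mul_pow, ← Real.rpow_mul_natCast hy, mul_left_comm,
    ← Real.rpow_one_add' hy (by convert hq using 1; push_cast; ring)]
  congr 2
  push_cast
  ring

open Complex in
lemma qFourier_sub_taylor_eq_integral {q : ℝ} (hq : 1 ≤ q) {f : ℝ → ℝ} (hf0 : ∀ x, 0 ≤ f x)
    (hfi : Integrable f) (hmean : Integrable fun x => x * f x ^ q)
    (hτ : Integrable fun x => x ^ 2 * f x ^ (2 * q - 1)) (ξ : ℝ) :
    qFourier q f ξ - ((∫ x, f x : ℝ) : ℂ) - I * ξ * ((∫ x, x * f x ^ q : ℝ) : ℂ) +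
        ((q / 2 * ξ ^ 2 * ∫ x, x ^ 2 * f x ^ (2 * q - 1) : ℝ) : ℂ) =
      ∫ x, f x • qExpIRem q (ξ * (x * f x ^ (q - 1))) := by
  have hqf : qFourier q f ξ = ∫ x, (f x : ℂ) * qExpC q (I * (ξ * (x * f x ^ (q - 1)) : ℝ)) := by
    unfold qFourier
    congr! 4 with x
    push_cast
    ring
  have hF : Integrable fun x => (f x : ℂ) := hfi.ofReal
  have hEcont : Continuous fun t : ℝ => qExpC q (I * t) := by
    simpa only [← qExpIPow.zero_eq_qExpC] using qExpIPow.continuous q 0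
  have hE : Integrable fun x => (f x : ℂ) * qExpC q (I * (ξ * (x * f x ^ (q - 1)) : ℝ)) := by
    refine hF.mono ?_ (Eventually.of_forall fun x => ?_)
    · have ha : AEMeasurable fun x => ξ * (x * f x ^ (q - 1)) :=
        (aemeasurable_id.mul (hfi.aemeasurable.pow_const _)).const_mul ξ
      exact hF.aestronglyMeasurable.mul
        (hEcont.comp_aestronglyMeasurable ha.aestronglyMeasurable)
    · rw [norm_mul]
      refine mul_le_of_le_one_right (norm_nonneg _) ?_
      simpa only [← qExpIPow.zero_eq_qExpC] using qExpIPow.norm_le_one hq 0 _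
  have hpt (x : ℝ) : f x • qExpIRem q (ξ * (x * f x ^ (q - 1))) =
      (f x : ℂ) * qExpC q (I * (ξ * (x * f x ^ (q - 1)) : ℝ)) - f x
        - I * ξ * (x * f x ^ q : ℝ) + (q / 2 * ξ ^ 2 * (x ^ 2 * f x ^ (2 * q - 1)) : ℝ) := by
    rw [← mul_mul_rpow_sub_one (q := q) (by linarith) (hf0 x),
      ← mul_mul_rpow_sub_one_sq (q := q) (by linarith) (hf0 x), real_smul, qExpIRem]
    push_cast
    ring
  have hmean' : Integrable fun x => I * ξ * (x * f x ^ q : ℝ) :=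
    (hmean.ofReal (𝕜 := ℂ)).const_mul (I * ξ)
  have hτ' : Integrable fun x => ((q / 2 * ξ ^ 2 * (x ^ 2 * f x ^ (2 * q - 1)) : ℝ) : ℂ) :=
    (hτ.const_mul (q / 2 * ξ ^ 2)).ofReal
  have hE1 : Integrable fun x => (f x : ℂ) * qExpC q (I * (ξ * (x * f x ^ (q - 1)) : ℝ)) - f x :=
    hE.sub hF
  have hE1m : Integrable fun x => (f x : ℂ) * qExpC q (I * (ξ * (x * f x ^ (q - 1)) : ℝ)) - f x
      - I * ξ * (x * f x ^ q : ℝ) := hE1.sub hmean'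
  rw [integral_congr_ae (ae_of_all _ hpt), integral_add hE1m hτ', integral_sub hE1 hmean',
    integral_sub hE hF, integral_const_mul,
    integral_complex_ofReal, integral_complex_ofReal, integral_complex_ofReal,
    integral_const_mul, hqf]

theorem qFourier_small_xi_expansion_general (q : ℝ) (hq1 : 1 ≤ q)
    (f : ℝ → ℝ) (hf0 : ∀ x, 0 ≤ f x) (hfi : Integrable f) (hf1 : ∫ x : ℝ, f x = 1)
    (hν : Integrable (fun x : ℝ => f x ^ q))
    (hmean : Integrable (fun x : ℝ => x * f x ^ q))
    (hτ : Integrable (fun x : ℝ => x ^ 2 * f x ^ (2 * q - 1))) :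
    Tendsto
      (fun ξ : ℝ =>
        (qFourier q f ξ - 1 - Complex.I * (ξ : ℂ) * ((qMean q f * ∫ x : ℝ, f x ^ q : ℝ) : ℂ) +
            (((q / 2) * ξ ^ 2 * ∫ x : ℝ, x ^ 2 * f x ^ (2 * q - 1) : ℝ) : ℂ)) / ((ξ ^ 2 : ℝ) : ℂ))
      (nhdsWithin 0 {0}ᶜ) (nhds 0) := by
  have hμν : qMean q f * ∫ x, f x ^ q = ∫ x, x * f x ^ q :=
    div_mul_cancel₀ _ (integral_rpow_ne_zero hf0 hν (by simp [hf1]))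
  have hτ' : Integrable fun x => f x * (x * f x ^ (q - 1)) ^ 2 := hτ.congr <|
    Eventually.of_forall fun x => (mul_mul_rpow_sub_one_sq (by linarith) (hf0 x) x).symm
  refine (tendsto_inv_sq_smul_integral_smul_comp_mul (a := fun x => x * f x ^ (q - 1))
    hfi.aemeasurable hf0 (aemeasurable_id.mul (hfi.aemeasurable.pow_const (q - 1)))
    (qExpIRem.continuous q) (qExpIRem.norm_le_sq hq1) (qExpIRem.norm_le_cube hq1) hτ').congr fun ξ => ?_
  have key := qFourier_sub_taylor_eq_integral hq1 hf0 hfi hmean hτ ξ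
  rw [hf1, Complex.ofReal_one] at key
  rw [hμν, key, div_eq_inv_mul, ← Complex.ofReal_inv, ← Complex.real_smul]

/-- The small-`ξ` asymptotic expansion of the `q`-Fourier transform of a probability
density: `F_q[f](ξ) = 1 + iξ μ_q(f) ν_q(f) - (q/2) ξ² τ + o(ξ²)` as `ξ → 0`, where
`ν_q(f) = ∫ f^q` and `τ = ∫ x² f^{2q-1}`. -/
theorem qFourier_small_xi_expansion (q : ℝ) (hq1 : 1 ≤ q) (hq2 : q < 2)
    (f : ℝ → ℝ) (hf0 : ∀ x, 0 ≤ f x) (hfi : Integrable f) (hf1 : ∫ x : ℝ, f x = 1)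
    (hν : Integrable (fun x : ℝ => f x ^ q))
    (hν2 : Integrable (fun x : ℝ => f x ^ (2 * q - 1)))
    (hmean : Integrable (fun x : ℝ => x * f x ^ q))
    (hτ : Integrable (fun x : ℝ => x ^ 2 * f x ^ (2 * q - 1))) :
    Tendsto
      (fun ξ : ℝ =>
        (qFourier q f ξ - 1 - Complex.I * (ξ : ℂ) * ((qMean q f * ∫ x : ℝ, f x ^ q : ℝ) : ℂ) +
            (((q / 2) * ξ ^ 2 * ∫ x : ℝ, x ^ 2 * f x ^ (2 * q - 1) : ℝ) : ℂ)) / ((ξ ^ 2 : ℝ) : ℂ))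
      (nhdsWithin 0 {0}ᶜ) (nhds 0) :=
  qFourier_small_xi_expansion_general q hq1 f hf0 hfi hf1 hν hmean hτ
end
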